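/- For two functions f, g : X → ℝ on the same space, the Reeb radii satisfy |ρ_f(x,y) − ρ_g(x,y)| ≤ 2‖f − g‖_∞ for all x, y ∈ X, where ρ_h(x,y) := inf over paths γ from x to y of sup_t |h(x) − h(γ(t))|. -/

import Mathlib

open scoped ENNReal unitInterval

/- If `|f - g| ≤ D` everywhere, then along any path `|f x - f (γ t)|` exceeds
`|g x - g (γ t)|` by at most `2D` (one `D` at each end of the difference), so every path bound
for `g` is one for `f` up to `2D`, and vice versa. Since this comparison holds in `ℝ≥0∞`, an
infinite radius for one function forces one for the other, and the `toReal` junk value `0` then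
appears on both sides. -/

/-- The Reeb radius: infimum over continuous paths from `x` to `y` of the
supremum of `|f x - f (γ t)|` along the path. -/
noncomputable def reebRadius {X : Type*} [TopologicalSpace X] (f : X → ℝ) (x y : X) : ℝ≥0∞ :=
  ⨅ γ : Path x y, ⨆ t : unitInterval, ENNReal.ofReal |f x - f (γ t)|

lemma ENNReal.abs_toReal_sub_le {a b : ℝ≥0∞} {c : ℝ} (hc : 0 ≤ c)
    (hab : a ≤ b + ENNReal.ofReal c) (hba : b ≤ a + ENNReal.ofReal c) :
    |a.toReal - b.toReal| ≤ c := by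
  by_cases ha : a = ⊤
  · have hb : b = ⊤ := by simpa [ha] using hab
    simp [ha, hb, hc]
  have hb : b ≠ ⊤ := ne_top_of_le_ne_top (by simpa using ha) hba
  have h₁ := ENNReal.toReal_mono (by simpa using hb) hab
  have h₂ := ENNReal.toReal_mono (by simpa using ha) hba
  rw [ENNReal.toReal_add hb ENNReal.ofReal_ne_top, ENNReal.toReal_ofReal hc] at h₁
  rw [ENNReal.toReal_add ha ENNReal.ofReal_ne_top, ENNReal.toReal_ofReal hc] at h₂
  rw [abs_sub_le_iff]
  constructor <;> linarith

lemma abs_sub_le_abs_sub_add_of_abs_sub_le {X : Type*} {f g : X → ℝ} {D : ℝ} (hD : ∀ z, |f z - g z| ≤ D)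
    (x z : X) : |f x - f z| ≤ |g x - g z| + 2 * D := by
  have hx := abs_le.mp (hD x)
  have hz := abs_le.mp (hD z)
  exact abs_le.mpr ⟨by linarith [neg_abs_le (g x - g z)], by linarith [le_abs_self (g x - g z)]⟩

lemma reebRadius_le_add_of_abs_sub_le {X : Type*} [TopologicalSpace X] {f g : X → ℝ} {D : ℝ}
    (hD : ∀ z, |f z - g z| ≤ D) (x y : X) :
    reebRadius f x y ≤ reebRadius g x y + ENNReal.ofReal (2 * D) := by
  rw [reebRadius, reebRadius, ENNReal.iInf_add]
  refine iInf_mono fun γ => iSup_le fun t => ?_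
  calc ENNReal.ofReal |f x - f (γ t)|
      ≤ ENNReal.ofReal (|g x - g (γ t)| + 2 * D) :=
        ENNReal.ofReal_le_ofReal (abs_sub_le_abs_sub_add_of_abs_sub_le hD x (γ t))
    _ ≤ ENNReal.ofReal |g x - g (γ t)| + ENNReal.ofReal (2 * D) := ENNReal.ofReal_add_le
    _ ≤ (⨆ s : I, ENNReal.ofReal |g x - g (γ s)|) + ENNReal.ofReal (2 * D) := by
        gcongr
        exact le_iSup (fun s : I => ENNReal.ofReal |g x - g (γ s)|) t

theorem reebRadius_perturbation_bound_general {X : Type*} [TopologicalSpace X]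
    (f g : X → ℝ)
    (hbf : ∃ C : ℝ, ∀ x, |f x| ≤ C) (hbg : ∃ C : ℝ, ∀ x, |g x| ≤ C) :
    ∀ x y : X,
      |(reebRadius f x y).toReal - (reebRadius g x y).toReal| ≤
        2 * ⨆ x : X, |f x - g x| := by
  intro x y
  obtain ⟨Cf, hCf⟩ := hbf
  obtain ⟨Cg, hCg⟩ := hbg
  have hbdd : BddAbove (Set.range fun z : X => |f z - g z|) :=
    ⟨Cf + Cg, Set.forall_mem_range.mpr fun z => (abs_sub _ _).trans (add_le_add (hCf z) (hCg z))⟩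
  have hD : ∀ z, |f z - g z| ≤ ⨆ z : X, |f z - g z| := le_ciSup hbdd
  have hD' : ∀ z, |g z - f z| ≤ ⨆ z : X, |f z - g z| := fun z => abs_sub_comm (g z) _ ▸ hD z
  exact ENNReal.abs_toReal_sub_le (by linarith [abs_nonneg (f x - g x), hD x])
    (reebRadius_le_add_of_abs_sub_le hD x y) (reebRadius_le_add_of_abs_sub_le hD' x y)

theorem reebRadius_perturbation_bound {X : Type*} [TopologicalSpace X] [PathConnectedSpace X]
    (f g : X → ℝ) (hf : Continuous f) (hg : Continuous g)
    (hbf : ∃ C : ℝ, ∀ x, |f x| ≤ C) (hbg : ∃ C : ℝ, ∀ x, |g x| ≤ C)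
    (hfin_f : ∀ x y : X, reebRadius f x y ≠ ⊤)
    (hfin_g : ∀ x y : X, reebRadius g x y ≠ ⊤) :
    ∀ x y : X,
      |(reebRadius f x y).toReal - (reebRadius g x y).toReal| ≤
        2 * ⨆ x : X, |f x - g x| :=
  reebRadius_perturbation_bound_general f g hbf hbg
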